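/- Let (S_n)_{n≥0} be a random walk on ℤ and (ξ(s))_{s∈ℤ} a family of identically distributed real random variables, with (S_n) independent of (ξ(s))_{s∈ℤ}. For k ≥ 1 let τ_k = inf{m ≥ 0 : #{S_1,…,S_m} ≥ k} be the time at which the walk visits its k-th distinct site. Then for all measurable sets B ⊂ ℕ and A ⊂ ℝ, P(τ_k ∈ B, ξ(S_{τ_k}) ∈ A) = P(τ_k ∈ B) · P(ξ(0) ∈ A). -/
import Mathlib


open MeasureTheory ProbabilityTheory Filter

lemma natSInf_eq_iff {s : Set ℕ} {m : ℕ} :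
    sInf s = m ↔ (m ∈ s ∧ ∀ j < m, j ∉ s) ∨ (m = 0 ∧ ∀ j, j ∉ s) := by
  constructor
  · rintro rfl
    by_cases hs : s.Nonempty
    · exact Or.inl ⟨Nat.sInf_mem hs, fun j hj => Nat.notMem_of_lt_sInf hj⟩
    · rw [Set.not_nonempty_iff_eq_empty] at hs
      subst hs
      exact Or.inr ⟨Nat.sInf_empty, fun j => id⟩
  · rintro (⟨hm, hlt⟩ | ⟨rfl, hall⟩)
    · refine le_antisymm (Nat.sInf_le hm) (le_of_not_gt fun h => ?_)
      exact hlt _ h (Nat.sInf_mem ⟨m, hm⟩)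
    · have : s = ∅ := Set.eq_empty_iff_forall_notMem.2 hall
      simp [this]

lemma card_image_meas {Ω : Type*} (S : ℕ → Ω → ℤ) (j : ℕ) :
    Measurable[⨆ n, MeasurableSpace.comap (S n) inferInstance]
      (fun ω => ((Finset.Icc 1 j).image (fun i => S i ω)).card) := by
  letI m₁ : MeasurableSpace Ω := ⨆ n, MeasurableSpace.comap (S n) inferInstance
  have hS : ∀ n, Measurable[m₁] (S n) := fun n =>
    Measurable.of_comap_le (le_iSup (fun n => MeasurableSpace.comap (S n) inferInstance) n)
  have hf : Measurable[m₁] (fun ω => fun i : (Finset.Icc 1 j : Finset ℕ) => S i ω) :=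
    measurable_pi_lambda _ (fun i => hS i)
  have hH : Measurable (fun v : ((Finset.Icc 1 j : Finset ℕ) → ℤ) =>
      (Finset.univ.image v).card) := Measurable.of_discrete
  have heq : (fun ω => ((Finset.Icc 1 j).image (fun i => S i ω)).card)
      = (fun v : ((Finset.Icc 1 j : Finset ℕ) → ℤ) => (Finset.univ.image v).card)
        ∘ (fun ω => fun i : (Finset.Icc 1 j : Finset ℕ) => S i ω) := by
    funext ω
    simp only [Function.comp]
    congr 1
    ext x
    simp [Finset.mem_image]
  rw [heq]
  exact hH.comp hf

lemma tau_meas {Ω : Type*} (S : ℕ → Ω → ℤ) (k : ℕ) (τ : Ω → ℕ)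
    (hτ : ∀ ω, τ ω = sInf {m : ℕ | k ≤ ((Finset.Icc 1 m).image (fun i => S i ω)).card})
    (m : ℕ) :
    MeasurableSet[⨆ n, MeasurableSpace.comap (S n) inferInstance] {ω | τ ω = m} := by
  letI m₁ : MeasurableSpace Ω := ⨆ n, MeasurableSpace.comap (S n) inferInstance
  set c : ℕ → Ω → ℕ := fun j ω => ((Finset.Icc 1 j).image (fun i => S i ω)).card with hc_def
  have hc : ∀ j, Measurable[m₁] (c j) := fun j => card_image_meas S j
  have hset : {ω | τ ω = m}
      = ({ω | k ≤ c m ω} ∩ ⋂ j, ⋂ _ : j < m, {ω | k ≤ c j ω}ᶜ)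
        ∪ ({ω | m = 0} ∩ ⋂ j, {ω | k ≤ c j ω}ᶜ) := by
    ext ω
    rw [Set.mem_setOf_eq, hτ ω, natSInf_eq_iff]
    simp [hc_def, and_comm]
  rw [hset]
  have h1 : ∀ j, MeasurableSet[m₁] {ω | k ≤ c j ω} := fun j => (hc j) measurableSet_Ici
  have h0 : MeasurableSet[m₁] {ω | m = 0} := by
    by_cases h : m = 0 <;> simp [h]
  exact ((h1 m).inter (MeasurableSet.iInter fun j => MeasurableSet.iInter fun _ =>
    (h1 j).compl)).union (h0.inter (MeasurableSet.iInter fun j => (h1 j).compl))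

/-- Independence of the scenery from the walk: for a random walk `S` on `ℤ` independent of an
identically distributed scenery `ξ`, the variables `τ_k` (first time the walk has visited `k`
distinct sites) and `ξ(S_{τ_k})` satisfy
`P(τ_k ∈ B, ξ(S_{τ_k}) ∈ A) = P(τ_k ∈ B) ⬝ P(ξ(0) ∈ A)`. -/
theorem stmt_0 {Ω : Type*} [MeasurableSpace Ω] (μ : Measure Ω) [IsProbabilityMeasure μ]
    (S : ℕ → Ω → ℤ) (ξ : ℤ → Ω → ℝ)
    (hS0 : ∀ ω, S 0 ω = 0)
    (hSmeas : ∀ n, Measurable (S n)) (hξmeas : ∀ s, Measurable (ξ s))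
    (hident : ∀ s : ℤ, μ.map (ξ s) = μ.map (ξ 0))
    (hindep : Indep (⨆ n, MeasurableSpace.comap (S n) inferInstance)
      (⨆ s, MeasurableSpace.comap (ξ s) inferInstance) μ)
    (k : ℕ) (hk : 1 ≤ k) (τ : Ω → ℕ)
    (hτ : ∀ ω, τ ω = sInf {m : ℕ | k ≤ ((Finset.Icc 1 m).image (fun i => S i ω)).card})
    (B : Set ℕ) (A : Set ℝ) (hA : MeasurableSet A) :
    μ {ω | τ ω ∈ B ∧ ξ (S (τ ω) ω) ω ∈ A}
      = μ {ω | τ ω ∈ B} * μ {ω | ξ 0 ω ∈ A} := by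
  set E : ℕ × ℤ → Set Ω :=
    fun p => ({ω | τ ω = p.1} ∩ S p.1 ⁻¹' {p.2}) ∩ {ω | p.1 ∈ B} with hE_def
  have hS1 : ∀ n, Measurable[⨆ n, MeasurableSpace.comap (S n) inferInstance] (S n) := fun n =>
    Measurable.of_comap_le (le_iSup (fun n => MeasurableSpace.comap (S n) inferInstance) n)
  have hEmeas : ∀ p, MeasurableSet[⨆ n, MeasurableSpace.comap (S n) inferInstance] (E p) := by
    intro p
    refine ((tau_meas S k τ hτ p.1).inter ((hS1 p.1) (measurableSet_singleton p.2))).inter ?_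
    by_cases h : p.1 ∈ B <;> simp [h]
  have hξA : ∀ s : ℤ,
      MeasurableSet[⨆ s, MeasurableSpace.comap (ξ s) inferInstance] (ξ s ⁻¹' A) := fun s =>
    Measurable.of_comap_le (le_iSup (fun s => MeasurableSpace.comap (ξ s) inferInstance) s) hA
  -- independence product formula
  have hprod : ∀ p : ℕ × ℤ, μ (E p ∩ ξ p.2 ⁻¹' A) = μ (E p) * μ (ξ 0 ⁻¹' A) := by
    intro p
    have := (hindep.indepSet_of_measurableSet (hEmeas p) (hξA p.2)).measure_inter_eq_mul
    rw [this]
    congr 1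
    rw [← Measure.map_apply (hξmeas p.2) hA, hident p.2, Measure.map_apply (hξmeas 0) hA]
  -- disjointness
  have hdisj : Pairwise (Function.onFun Disjoint E) := by
    intro p q hpq
    rw [Function.onFun, Set.disjoint_left]
    rintro ω ⟨⟨hτp, hSp⟩, -⟩ ⟨⟨hτq, hSq⟩, -⟩
    apply hpq
    have h1 : p.1 = q.1 := by rw [← hτp, ← hτq]
    ext
    · exact h1
    · simp only [Set.mem_preimage, Set.mem_singleton_iff] at hSp hSq
      rw [← hSp, ← hSq, h1]
  -- decompositions of both events
  have hLHS : {ω | τ ω ∈ B ∧ ξ (S (τ ω) ω) ω ∈ A} = ⋃ p : ℕ × ℤ, E p ∩ ξ p.2 ⁻¹' A := by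
    ext ω
    simp only [Set.mem_setOf_eq, Set.mem_iUnion, hE_def, Set.mem_inter_iff, Set.mem_preimage,
      Set.mem_singleton_iff]
    constructor
    · rintro ⟨hB, hξ⟩
      exact ⟨(τ ω, S (τ ω) ω), ⟨⟨⟨rfl, rfl⟩, hB⟩, hξ⟩⟩
    · rintro ⟨⟨m, s⟩, ⟨⟨hτp, hSp⟩, hB⟩, hξ⟩
      subst hτp
      simp only at hB hξ hSp ⊢
      rw [← hSp] at hξ
      exact ⟨hB, hξ⟩
  have hRHS : {ω | τ ω ∈ B} = ⋃ p : ℕ × ℤ, E p := by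
    ext ω
    simp only [Set.mem_setOf_eq, Set.mem_iUnion, hE_def, Set.mem_inter_iff, Set.mem_preimage,
      Set.mem_singleton_iff]
    constructor
    · intro hB
      exact ⟨(τ ω, S (τ ω) ω), ⟨⟨rfl, rfl⟩, hB⟩⟩
    · rintro ⟨⟨m, s⟩, ⟨⟨hτp, -⟩, hB⟩⟩
      subst hτp; exact hB
  have hm₁le : (⨆ n, MeasurableSpace.comap (S n) inferInstance) ≤ ‹MeasurableSpace Ω› :=
    iSup_le fun n => (hSmeas n).comap_le
  have hEmeas' : ∀ p, MeasurableSet (E p) := fun p => hm₁le _ (hEmeas p)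
  have hdisj2 : Pairwise (Function.onFun Disjoint (fun p : ℕ × ℤ => E p ∩ ξ p.2 ⁻¹' A)) :=
    fun p q hpq => Set.disjoint_of_subset Set.inter_subset_left Set.inter_subset_left
      (hdisj hpq)
  rw [hLHS, hRHS, measure_iUnion hdisj2 (fun p => (hEmeas' p).inter ((hξmeas p.2) hA)),
    measure_iUnion hdisj hEmeas']
  have hset0 : {ω | ξ 0 ω ∈ A} = ξ 0 ⁻¹' A := rfl
  rw [hset0, ← ENNReal.tsum_mul_right]
  exact tsum_congr hprod
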